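/- Let S ∈ Ω_{j−1} be normalized and let X, X′ ∈ e(S) with underline(X) = U_{j−1} ∪ {p} and underline(X′) = U_{j−1} ∪ {p′}, where p, p′ lie in the Aut(U_{j−1})-orbit of u_j. Then X and X′ lie in the same Aut(S)-orbit of partial assignments if and only if p and p′ lie in the same Aut(S)-orbit of U and X(p) = X′(p′). -/

import Mathlib

/-!
We model the setting of the paper: `U` and `R` are finite sets, `Γ` is a
subgroup of `Sym(U)` (here `Equiv.Perm U`).  A partial assignment `X : W → R`
with `W ⊆ U` is modeled as a function `U → Option R` whose domain
(`underline X`) is the set of points where it is `some`.  The paper's right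
action is rendered as the corresponding (mirror) left action:
`(γ • X)(u) = X(γ⁻¹ u)`, points are acted on by `u ↦ γ u` and sets by images.
-/

namespace PrefixAssignment

variable {U R : Type*}

/-- The domain `underline X` of a partial assignment. -/
def dom (X : U → Option R) : Set U := {u | X u ≠ none}

/-- The action of a permutation `γ` on a partial assignment:
`(psmul γ X)(u) = X(γ⁻¹ u)` (left-action form of the paper's
`X^γ(u) = X(u^{γ⁻¹})`). -/
def psmul (γ : Equiv.Perm U) (X : U → Option R) : U → Option R :=
  fun u => X (γ⁻¹ u)

open scoped Classical in
/-- Restriction of a partial assignment to a set `W` of variables. -/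
noncomputable def restrict (X : U → Option R) (W : Set U) : U → Option R :=
  fun u => if u ∈ W then X u else none

/-- `Uset u j = U_j = {u_1, …, u_j}` (`u` is 0-indexed). -/
def Uset {k : ℕ} (u : Fin k → U) (j : ℕ) : Set U :=
  {x | ∃ i : Fin k, (i : ℕ) < j ∧ u i = x}

/-- `Ω_j`: partial assignments whose domain lies in the `Γ`-orbit of `U_j`. -/
def OmegaJ (Γ : Subgroup (Equiv.Perm U)) {k : ℕ} (u : Fin k → U) (j : ℕ)
    (X : U → Option R) : Prop :=
  ∃ γ ∈ Γ, ⇑γ '' dom X = Uset u j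

/-- The extension relation `e ⊆ Ω_j × Ω_{j-1}`:  `erel Γ u j X S` holds iff
there is `γ ∈ Γ` taking the domain of `X` to `U_j`, the domain of `S` to
`U_{j-1}`, and the restriction of `γ • X` to `U_{j-1}` to `γ • S`. -/
def erel (Γ : Subgroup (Equiv.Perm U)) {k : ℕ} (u : Fin k → U) (j : ℕ)
    (X S : U → Option R) : Prop :=
  ∃ γ ∈ Γ, ⇑γ '' dom X = Uset u j ∧ ⇑γ '' dom S = Uset u (j - 1) ∧
    restrict (psmul γ X) (Uset u (j - 1)) = psmul γ S

/-- The setwise stabilizer `Aut(W)` of `W ⊆ U` in `Γ`. -/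
def AutSet (Γ : Subgroup (Equiv.Perm U)) (W : Set U) : Set (Equiv.Perm U) :=
  {γ | γ ∈ Γ ∧ ⇑γ '' W = W}

/-- The automorphism group (stabilizer) `Aut(S)` of a partial assignment `S` in `Γ`. -/
def AutAsg (Γ : Subgroup (Equiv.Perm U)) (S : U → Option R) : Set (Equiv.Perm U) :=
  {γ | γ ∈ Γ ∧ psmul γ S = S}

/-- The orbit of a point `p ∈ U` under a set `A` of permutations. -/
def ptOrbit (A : Set (Equiv.Perm U)) (p : U) : Set U :=
  {q | ∃ γ ∈ A, γ p = q}


/-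
Every extension of `S` agrees with `S` on `dom S = U_{j-1}`, so an element of `Aut(S)`, which
preserves `dom S`, carries `X` to `X'` exactly when it carries the one extra point `p` to `p'`
and the values there agree. That `p ∉ U_{j-1}` comes from `u_j ∉ U_{j-1}` and the fact that
`Aut(U_{j-1})` preserves `U_{j-1}`.
-/

@[simp]
theorem psmul_apply (γ : Equiv.Perm U) (X : U → Option R) (w : U) :
    psmul γ X w = X (γ⁻¹ w) := rfl

theorem notMem_dom {X : U → Option R} {w : U} : w ∉ dom X ↔ X w = none := not_not

theorem mem_dom_psmul {γ : Equiv.Perm U} {X : U → Option R} {w : U} :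
    w ∈ dom (psmul γ X) ↔ γ⁻¹ w ∈ dom X := Iff.rfl

theorem inv_apply_mem_dom_iff {γ : Equiv.Perm U} {S : U → Option R} (hγ : psmul γ S = S)
    {w : U} : γ⁻¹ w ∈ dom S ↔ w ∈ dom S := by
  rw [← mem_dom_psmul, hγ]

theorem apply_mem_dom_iff {γ : Equiv.Perm U} {S : U → Option R} (hγ : psmul γ S = S)
    {w : U} : γ w ∈ dom S ↔ w ∈ dom S := by
  simpa using (inv_apply_mem_dom_iff hγ (w := γ w)).symm

theorem apply_notMem_Uset {k : ℕ} {u : Fin k → U} (hu : Function.Injective u) (i : Fin k) :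
    u i ∉ Uset u i := by
  rintro ⟨i', hi', hi'i⟩
  exact (hu hi'i ▸ hi').false

theorem notMem_of_mem_ptOrbit_AutSet {Γ : Subgroup (Equiv.Perm U)} {W : Set U} {x q : U}
    (hq : q ∈ ptOrbit (AutSet Γ W) x) (hx : x ∉ W) : q ∉ W := by
  obtain ⟨δ, ⟨-, hδW⟩, rfl⟩ := hq
  rw [← hδW, δ.injective.mem_set_image]
  exact hx

theorem erel.apply_eq_of_mem_dom {Γ : Subgroup (Equiv.Perm U)} {k : ℕ} {u : Fin k → U}
    {j : ℕ} {X S : U → Option R} (h : erel Γ u j X S) {w : U} (hw : w ∈ dom S) :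
    X w = S w := by
  obtain ⟨γ, -, -, hγS, hγX⟩ := h
  have hγw : γ w ∈ Uset u (j - 1) := hγS ▸ Set.mem_image_of_mem γ hw
  simpa [restrict, hγw] using congrFun hγX (γ w)

theorem psmul_eq_iff_of_extends {γ : Equiv.Perm U} {S X X' : U → Option R} {p p' : U}
    (hγ : psmul γ S = S) (hX : ∀ w ∈ dom S, X w = S w) (hX' : ∀ w ∈ dom S, X' w = S w)
    (hdX : dom X = dom S ∪ {p}) (hdX' : dom X' = dom S ∪ {p'}) (hp : p ∉ dom S) :
    psmul γ X = X' ↔ γ p = p' ∧ X p = X' p' := by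
  constructor
  · rintro rfl
    have hγp : γ p ∈ dom (psmul γ X) := by
      rw [mem_dom_psmul, Equiv.Perm.inv_eq_iff_eq.2 rfl, hdX]
      exact Or.inr rfl
    rw [hdX'] at hγp
    obtain hγp | hγp := hγp
    · exact absurd ((apply_mem_dom_iff hγ).1 hγp) hp
    · exact ⟨hγp, by rw [← Set.mem_singleton_iff.1 hγp]; simp⟩
  · rintro ⟨rfl, hXp⟩
    funext w
    rw [psmul_apply]
    by_cases hwS : w ∈ dom S
    · rw [hX _ ((inv_apply_mem_dom_iff hγ).2 hwS), hX' w hwS]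
      exact congrFun hγ w
    by_cases hwp : w = γ p
    · rw [hwp, Equiv.Perm.inv_eq_iff_eq.2 rfl, hXp]
    have hwX' : w ∉ dom X' := by simp [hdX', hwS, hwp]
    have hwX : γ⁻¹ w ∉ dom X := by
      rw [hdX, Set.mem_union, inv_apply_mem_dom_iff hγ, Set.mem_singleton_iff,
        Equiv.Perm.inv_eq_iff_eq]
      tauto
    rw [notMem_dom.1 hwX, notMem_dom.1 hwX']

/-- For a normalized seed `S` and extensions `X, X' ∈ e(S)` with
`underline X = U_{j-1} ∪ {p}` and `underline X' = U_{j-1} ∪ {p'}`: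
`X` and `X'` lie in the same `Aut(S)`-orbit iff `p` and `p'` lie in the same
`Aut(S)`-orbit of `U` and `X(p) = X'(p')`. -/
theorem stmt_13 {U R : Type*}
    (Γ : Subgroup (Equiv.Perm U)) {k : ℕ} (u : Fin k → U)
    (hu : Function.Injective u)
    (j : ℕ) (hj1 : 1 ≤ j) (hjk : j ≤ k)
    (S X X' : U → Option R)
    (hSnorm : dom S = Uset u (j - 1))
    (p p' : U)
    (hp : p ∈ ptOrbit (AutSet Γ (Uset u (j - 1))) (u ⟨j - 1, by omega⟩))
    (hX : OmegaJ Γ u j X ∧ erel Γ u j X S)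
    (hX' : OmegaJ Γ u j X' ∧ erel Γ u j X' S)
    (hdX : dom X = Uset u (j - 1) ∪ {p})
    (hdX' : dom X' = Uset u (j - 1) ∪ {p'}) :
    (∃ γ ∈ AutAsg Γ S, psmul γ X = X') ↔
      ((∃ γ ∈ AutAsg Γ S, γ p = p') ∧ X p = X' p') := by
  rw [← hSnorm] at hdX hdX' hp
  have hpS : p ∉ dom S :=
    notMem_of_mem_ptOrbit_AutSet hp (hSnorm ▸ apply_notMem_Uset hu ⟨j - 1, by omega⟩)
  have key : ∀ γ ∈ AutAsg Γ S, psmul γ X = X' ↔ γ p = p' ∧ X p = X' p' := fun γ hγ =>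
    psmul_eq_iff_of_extends hγ.2 (fun _ => hX.2.apply_eq_of_mem_dom)
      (fun _ => hX'.2.apply_eq_of_mem_dom) hdX hdX' hpS
  constructor
  · rintro ⟨γ, hγ, hγX⟩
    obtain ⟨hγp, hXp⟩ := (key γ hγ).1 hγX
    exact ⟨⟨γ, hγ, hγp⟩, hXp⟩
  · rintro ⟨⟨γ, hγ, hγp⟩, hXp⟩
    exact ⟨γ, hγ, (key γ hγ).2 ⟨hγp, hXp⟩⟩

end PrefixAssignment
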